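/- Let F : C → B be a covering of k-categories with C connected. If H is an invertible k-linear endofunctor of C with F ∘ H = F and H fixes some object of C (H(x) = x), then H is the identity functor. Consequently the group Aut₁F acts freely on each fibre F⁻¹(b). -/

import Mathlib

/-! The objects fixed by `H` form a union of connected components: if `f : a ⟶ b` is nonzero and
`H a = a`, then `f` and `H f` are two lifts starting at `a` of the same morphism `F f`, and
injectivity of the star map at `a` forces them to end at the same object, so `H b = b` (dually,
using stars ending at `b`). Hence `H` is the identity on objects, and then on morphisms because a
covering is faithful. -/

open CategoryTheory

universe w v u

section CoveringDefs

variable (k : Type w) [CommRing k]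

/-- A functor between `k`-linear categories is `k`-linear:
it is additive and commutes with the scalar action on morphisms. -/
def IsLinearFunctor {C : Type u} [Category.{v} C] [Preadditive C] [CategoryTheory.Linear k C]
    {B : Type u} [Category.{v} B] [Preadditive B] [CategoryTheory.Linear k B]
    (F : C ⥤ B) : Prop :=
  (∀ (x y : C) (f g : x ⟶ y), F.map (f + g) = F.map f + F.map g) ∧
  (∀ (x y : C) (r : k) (f : x ⟶ y), F.map (r • f) = r • F.map f)

variable {C : Type u} [Category.{v} C] [Preadditive C] [CategoryTheory.Linear k C]
variable {B : Type u} [Category.{v} B] [Preadditive B] [CategoryTheory.Linear k B]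

/-- The canonical map `⊕_{y ∈ F⁻¹(c)} C(x,y) →+ B(F(x),c)` induced by `F`
on the source star. -/
noncomputable def starOutHom (F : C ⥤ B) (hF : IsLinearFunctor k F) (x : C) (c : B) :
    (DirectSum {y : C // F.obj y = c} (fun y => (x ⟶ y.1))) →+ (F.obj x ⟶ c) := by
  classical
  exact DirectSum.toAddMonoid fun y =>
    AddMonoidHom.mk' (fun f => F.map f ≫ eqToHom y.2)
      (fun f g => by (try simp only []); rw [hF.1 _ _ f g, Preadditive.add_comp])

/-- The canonical map `⊕_{y ∈ F⁻¹(c)} C(y,x) →+ B(c,F(x))` induced by `F`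
on the target star. -/
noncomputable def starInHom (F : C ⥤ B) (hF : IsLinearFunctor k F) (x : C) (c : B) :
    (DirectSum {y : C // F.obj y = c} (fun y => (y.1 ⟶ x))) →+ (c ⟶ F.obj x) := by
  classical
  exact DirectSum.toAddMonoid fun y =>
    AddMonoidHom.mk' (fun f => eqToHom y.2.symm ≫ F.map f)
      (fun f g => by (try simp only []); rw [hF.1 _ _ f g, Preadditive.comp_add])

/-- `F : C ⥤ B` is a covering of `k`-categories: it is a `k`-linear functor,
surjective on objects, inducing bijections on all source and target stars. -/
def IsCovering (F : C ⥤ B) : Prop :=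
  ∃ hF : IsLinearFunctor k F,
    Function.Surjective F.obj ∧
    (∀ (x : C) (c : B), Function.Bijective (starOutHom k F hF x c)) ∧
    (∀ (x : C) (c : B), Function.Bijective (starInHom k F hF x c))

end CoveringDefs

/-- A `k`-category is connected if the equivalence relation generated by
"there is a nonzero morphism from `x` to `y`" relates any two objects. -/
def IsConnectedKCat (C : Type u) [Category.{v} C] [Preadditive C] : Prop :=
  ∀ x y : C, Relation.EqvGen (fun a b : C => ∃ f : a ⟶ b, f ≠ 0) x y

section GaloisDefs

variable (k : Type w) [CommRing k]
variable {C : Type u} [Category.{v} C] [Preadditive C] [CategoryTheory.Linear k C]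
variable {B : Type u} [Category.{v} B] [Preadditive B] [CategoryTheory.Linear k B]
variable {D : Type u} [Category.{v} D] [Preadditive D] [CategoryTheory.Linear k D]

/-- `H` belongs to `Aut₁ F`: it is an invertible `k`-linear endofunctor with `F ∘ H = F`. -/
def MemAut1 (F : C ⥤ B) (H : C ⥤ C) : Prop :=
  IsLinearFunctor k H ∧
  (∃ Hinv : C ⥤ C, H ⋙ Hinv = 𝟭 C ∧ Hinv ⋙ H = 𝟭 C) ∧
  H ⋙ F = F

/-- A covering is Galois if its source is connected and `Aut₁ F` acts transitively
on some fibre. -/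
def IsGaloisCovering (F : C ⥤ B) : Prop :=
  IsCovering k F ∧ IsConnectedKCat C ∧
  ∃ b₀ : B, ∀ x y : C, F.obj x = b₀ → F.obj y = b₀ →
    ∃ H : C ⥤ C, MemAut1 k F H ∧ H.obj x = y

/-- A morphism `(H, J)` of coverings from `F : C ⥤ B` to `G : D ⥤ B`:
`H` and `J` are `k`-linear, `J` is an isomorphism which is the identity on objects,
and `G ∘ H = J ∘ F`. -/
def IsCoveringMorphism (F : C ⥤ B) (G : D ⥤ B) (H : C ⥤ D) (J : B ⥤ B) : Prop :=
  IsLinearFunctor k H ∧ IsLinearFunctor k J ∧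
  (∃ Jinv : B ⥤ B, J ⋙ Jinv = 𝟭 B ∧ Jinv ⋙ J = 𝟭 B) ∧
  (∀ b : B, J.obj b = b) ∧
  H ⋙ G = F ⋙ J

end GaloisDefs

/-- A universal covering: a Galois covering `U` such that for every Galois covering
`F : C ⥤ B` and every pair of objects `u₀`, `c₀` above the same object of `B`,
there is a unique `k`-linear functor `H` with `F ∘ H = U` and `H u₀ = c₀`. -/
def IsUniversalCovering (k : Type w) [CommRing k]
    {U' : Type u} [Category.{v} U'] [Preadditive U'] [CategoryTheory.Linear k U']
    {B : Type u} [Category.{v} B] [Preadditive B] [CategoryTheory.Linear k B]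
    (U : U' ⥤ B) : Prop :=
  IsGaloisCovering k U ∧
  ∀ (C : Type u) [Category.{v} C] [Preadditive C] [CategoryTheory.Linear k C]
    (F : C ⥤ B), IsGaloisCovering k F →
    ∀ (u₀ : U') (c₀ : C), U.obj u₀ = F.obj c₀ →
      ∃! H : U' ⥤ C, IsLinearFunctor k H ∧ H ⋙ F = U ∧ H.obj u₀ = c₀

/-- Given a functor `F : C ⥤ B`, a choice `x` of objects of `C` above each object of `B`,
and an endofunctor `H` of `C`, the subset `Z_H(c,b) = F(C(x_b, H x_c))` of `B(b,c)`. -/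
def gradeSet {C : Type u} [Category.{v} C] {B : Type u} [Category.{v} B]
    (F : C ⥤ B) (x : B → C) (H : C ⥤ C) (b c : B) : Set (b ⟶ c) :=
  {g | ∃ (h₁ : b = F.obj (x b)) (h₂ : F.obj (H.obj (x c)) = c)
        (f : x b ⟶ H.obj (x c)), g = eqToHom h₁ ≫ F.map f ≫ eqToHom h₂}

/-- The homogeneous component `Z_H(c,b)` as a `k`-submodule of `B(b,c)`. -/
noncomputable def gradeSubmodule (k : Type w) [CommRing k]
    {C : Type u} [Category.{v} C]
    {B : Type u} [Category.{v} B] [Preadditive B] [CategoryTheory.Linear k B]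
    (F : C ⥤ B) (x : B → C) (H : C ⥤ C) (b c : B) : Submodule k (b ⟶ c) :=
  Submodule.span k (gradeSet F x H b c)

lemma DirectSum.eq_of_of_eq_of_of {ι : Type*} [DecidableEq ι] {β : ι → Type*}
    [∀ i, AddCommMonoid (β i)] {i j : ι} {a : β i} {b : β j}
    (h : DirectSum.of β i a = DirectSum.of β j b) (ha : a ≠ 0) : i = j :=
  (((DFinsupp.single_eq_single_iff i j a b).mp h).resolve_right fun h0 => ha h0.1).1

lemma CategoryTheory.Functor.eq_id_of_comp_eq_of_obj_eq {C : Type*} [Category C] {B : Type*}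
    [Category B] {F : C ⥤ B} [F.Faithful] {H : C ⥤ C} (hHF : H ⋙ F = F)
    (hobj : ∀ a, H.obj a = a) : H = 𝟭 C := by
  refine Functor.ext hobj fun a b f => F.map_injective ?_
  have hHf := Functor.congr_hom hHF f
  simp only [Functor.comp_map] at hHf
  simp [hHf, eqToHom_map]

lemma IsConnectedKCat.forall_of_iff_of_ne_zero {C : Type u} [Category.{v} C] [Preadditive C]
    (hC : IsConnectedKCat C) {P : C → Prop}
    (hP : ∀ (a b : C) (f : a ⟶ b), f ≠ 0 → (P a ↔ P b)) {x : C} (hx : P x) (y : C) :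
    P y := by
  have hxy : Setoid.ker P x y :=
    Setoid.eqvGen_le (fun a b ⟨f, hf⟩ => propext (hP a b f hf)) (hC x y)
  exact (Setoid.ker_def.mp hxy).mp hx

section Stars

variable {k : Type w} [CommRing k]
variable {C : Type u} [Category.{v} C] [Preadditive C] [Linear k C]
variable {B : Type u} [Category.{v} B] [Preadditive B] [Linear k B]
variable {F : C ⥤ B} (hF : IsLinearFunctor k F) {x : C} {c : B}

lemma starOutHom_of [DecidableEq {y : C // F.obj y = c}] (y : {y : C // F.obj y = c})
    (f : x ⟶ y.1) :
    starOutHom k F hF x c (DirectSum.of (fun y : {y : C // F.obj y = c} => x ⟶ y.1) y f) =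
      F.map f ≫ eqToHom y.2 := by
  rw [starOutHom]
  erw [DirectSum.toAddMonoid_of]
  rfl

lemma starInHom_of [DecidableEq {y : C // F.obj y = c}] (y : {y : C // F.obj y = c})
    (f : y.1 ⟶ x) :
    starInHom k F hF x c (DirectSum.of (fun y : {y : C // F.obj y = c} => y.1 ⟶ x) y f) =
      eqToHom y.2.symm ≫ F.map f := by
  rw [starInHom]
  erw [DirectSum.toAddMonoid_of]
  rfl

end Stars

namespace IsCovering

variable {k : Type w} [CommRing k]
variable {C : Type u} [Category.{v} C] [Preadditive C] [Linear k C]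
variable {B : Type u} [Category.{v} B] [Preadditive B] [Linear k B]
variable {F : C ⥤ B}

lemma faithful (hF : IsCovering k F) : F.Faithful where
  map_injective {a b} f g hfg := by
    classical
    obtain ⟨hlin, -, hout, -⟩ := hF
    exact DirectSum.of_injective (β := fun y : {y : C // F.obj y = F.obj b} => a ⟶ y.1)
      ⟨b, rfl⟩ ((hout a _).1 (by rw [starOutHom_of, starOutHom_of]; simpa using hfg))

lemma target_eq_of_map_eq (hF : IsCovering k F) {a y y' : C} {f : a ⟶ y} {g : a ⟶ y'}
    (h : F.obj y = F.obj y') (hfg : F.map f ≫ eqToHom h = F.map g) (hf : f ≠ 0) : y = y' := by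
  classical
  obtain ⟨hlin, -, hout, -⟩ := hF
  have hlifts := (hout a (F.obj y')).1 (a₁ := DirectSum.of _ ⟨y, h⟩ f)
    (a₂ := DirectSum.of _ ⟨y', rfl⟩ g) (by rw [starOutHom_of, starOutHom_of]; simpa using hfg)
  exact congrArg Subtype.val (DirectSum.eq_of_of_eq_of_of hlifts hf)

lemma source_eq_of_map_eq (hF : IsCovering k F) {a y y' : C} {f : y ⟶ a} {g : y' ⟶ a}
    (h : F.obj y' = F.obj y) (hfg : eqToHom h ≫ F.map f = F.map g) (hf : f ≠ 0) : y = y' := by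
  classical
  obtain ⟨hlin, -, -, hin⟩ := hF
  have hlifts := (hin a (F.obj y')).1 (a₁ := DirectSum.of _ ⟨y, h.symm⟩ f)
    (a₂ := DirectSum.of _ ⟨y', rfl⟩ g) (by rw [starInHom_of, starInHom_of]; simpa using hfg)
  exact congrArg Subtype.val (DirectSum.eq_of_of_eq_of_of hlifts hf)

lemma obj_eq_self_iff_of_ne_zero (hF : IsCovering k F) {H : C ⥤ C} (hHF : H ⋙ F = F)
    {a b : C} (f : a ⟶ b) (hf : f ≠ 0) : H.obj a = a ↔ H.obj b = b := by
  have hHf := Functor.congr_hom hHF f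
  simp only [Functor.comp_map] at hHf
  constructor
  · intro ha
    refine (hF.target_eq_of_map_eq (g := eqToHom ha.symm ≫ H.map f)
      (Functor.congr_obj hHF b).symm ?_ hf).symm
    simp [hHf, eqToHom_map]
  · intro hb
    refine (hF.source_eq_of_map_eq (g := H.map f ≫ eqToHom hb)
      (Functor.congr_obj hHF a) ?_ hf).symm
    simp [hHf, eqToHom_map]

end IsCovering

theorem aut_acts_freely (k : Type w) [CommRing k]
    {C : Type u} [Category.{v} C] [Preadditive C] [CategoryTheory.Linear k C]
    {B : Type u} [Category.{v} B] [Preadditive B] [CategoryTheory.Linear k B]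
    (F : C ⥤ B) (hF : IsCovering k F) (hC : IsConnectedKCat C)
    (H : C ⥤ C) (hH : MemAut1 k F H) (x : C) (hx : H.obj x = x) :
    H = 𝟭 C := by
  obtain ⟨-, -, hHF⟩ := hH
  have hobj : ∀ y, H.obj y = y :=
    hC.forall_of_iff_of_ne_zero (fun _ _ f hf => hF.obj_eq_self_iff_of_ne_zero hHF f hf) hx
  have := hF.faithful
  exact Functor.eq_id_of_comp_eq_of_obj_eq hHF hobj
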